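/- arXiv:0903.1214 — 4 statements merged into one kernel-verified Lean document; each statement's English description precedes it below -/
import Mathlib

section
/- Let g be a Lie algebra and N : g → g a linear endomorphism whose Nijenhuis torsion vanishes, i.e. [Nx, Ny] = N([Nx,y] + [x,Ny] - N[x,y]) for all x,y. Then the deformed bracket [x,y]_N := [Nx,y] + [x,Ny] - N([x,y]) satisfies the Jacobi identity, so (g, [·,·]_N) is a Lie algebra. -/
/-- The deformed bracket `[x,y]_N = [Nx,y] + [x,Ny] - N[x,y]`. -/
def deformedBracket {k g : Type*} [CommRing k] [LieRing g] [LieAlgebra k g]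
    (N : g →ₗ[k] g) (x y : g) : g :=
  ⁅N x, y⁆ + ⁅x, N y⁆ - N ⁅x, y⁆

/-- If the Nijenhuis torsion of `N` vanishes, i.e.
`[Nx, Ny] = N([x,y]_N)` for all `x, y`, then the deformed bracket satisfies the
Jacobi identity. -/
theorem deformed_bracket_jacobi_of_nijenhuis
    {k g : Type*} [CommRing k] [LieRing g] [LieAlgebra k g] (N : g →ₗ[k] g)
    (htorsion : ∀ x y : g, ⁅N x, N y⁆ = N (deformedBracket N x y)) :
    ∀ x y z : g,
      deformedBracket N (deformedBracket N x y) z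
        + deformedBracket N (deformedBracket N y z) x
        + deformedBracket N (deformedBracket N z x) y = 0 := by
  intro x y z
  have jac : ∀ a b c : g, ⁅⁅a, b⁆, c⁆ + ⁅⁅b, c⁆, a⁆ + ⁅⁅c, a⁆, b⁆ = 0 := by
    intro a b c
    rw [← lie_skew ⁅a, b⁆ c, ← lie_skew ⁅b, c⁆ a, ← lie_skew ⁅c, a⁆ b,
      ← neg_add, ← neg_add, neg_eq_zero]
    exact lie_jacobi c a b
  have ht : ∀ a b : g, ⁅N a, N b⁆ = N ⁅N a, b⁆ + N ⁅a, N b⁆ - N (N ⁅a, b⁆) := by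
    intro a b
    rw [htorsion]
    simp [deformedBracket]
  simp only [deformedBracket] at htorsion
  simp only [deformedBracket, ← htorsion]
  simp only [add_lie, lie_add, sub_lie, lie_sub, map_add, map_sub]
  rw [ht ⁅x, y⁆ z, ht ⁅y, z⁆ x, ht ⁅z, x⁆ y]
  trans ((⁅⁅N x, N y⁆, z⁆ + ⁅⁅N y, z⁆, N x⁆ + ⁅⁅z, N x⁆, N y⁆)
      + (⁅⁅N x, y⁆, N z⁆ + ⁅⁅y, N z⁆, N x⁆ + ⁅⁅N z, N x⁆, y⁆)
      + (⁅⁅x, N y⁆, N z⁆ + ⁅⁅N y, N z⁆, x⁆ + ⁅⁅N z, x⁆, N y⁆))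
    - N ((⁅⁅N x, y⁆, z⁆ + ⁅⁅y, z⁆, N x⁆ + ⁅⁅z, N x⁆, y⁆)
      + (⁅⁅x, N y⁆, z⁆ + ⁅⁅N y, z⁆, x⁆ + ⁅⁅z, x⁆, N y⁆)
      + (⁅⁅x, y⁆, N z⁆ + ⁅⁅y, N z⁆, x⁆ + ⁅⁅N z, x⁆, y⁆))
    + N (N (⁅⁅x, y⁆, z⁆ + ⁅⁅y, z⁆, x⁆ + ⁅⁅z, x⁆, y⁆))
  · simp only [map_add]
    abel
  · rw [jac (N x) (N y) z, jac (N x) y (N z), jac x (N y) (N z),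
      jac (N x) y z, jac x (N y) z, jac x y (N z), jac x y z]
    simp
end

section
/- Let g be a Lie algebra, V a vector space, and A, B : V → g injective linear maps with range(A) = range(B) =: W, where W is a Lie subalgebra of g. Suppose moreover that every linear combination λA + μB ((λ,μ) ≠ (0,0)) is injective with image a Lie subalgebra of g. If for all p,q ∈ V we have [A p, B q] + [B p, A q] = A([p,q]_B) + B([p,q]_A) (where [·,·]_A and [·,·]_B are the brackets induced on V by A and B respectively), then for all λ, μ the bracket induced by λA+μB equals λ[·,·]_A + μ[·,·]_B. -/
/-- Let `A, B : V → g` be injective linear maps with equal involutive images,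
such that every nontrivial combination `λA + μB` is injective with involutive image.
If `[Ap, Bq] + [Bp, Aq] = A([p,q]_B) + B([p,q]_A)` for all `p, q`, then the bracket
induced by `λA + μB` equals `λ[·,·]_A + μ[·,·]_B`. -/
theorem linear_compatibility_of_cross_identity
    {k g V : Type*} [Field k] [LieRing g] [LieAlgebra k g]
    [AddCommGroup V] [Module k V]
    (A B : V →ₗ[k] g) (hA : Function.Injective A) (hB : Function.Injective B)
    (hrange : LinearMap.range A = LinearMap.range B)
    (hW : ∀ x y : g, x ∈ LinearMap.range A → y ∈ LinearMap.range A →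
      ⁅x, y⁆ ∈ LinearMap.range A)
    (hcomb : ∀ lam mu : k, (lam, mu) ≠ (0, 0) →
      Function.Injective (lam • A + mu • B) ∧
      ∀ p q : V, ⁅(lam • A + mu • B) p, (lam • A + mu • B) q⁆
        ∈ LinearMap.range (lam • A + mu • B))
    (bA bB : V → V → V)
    (hbA : ∀ p q : V, A (bA p q) = ⁅A p, A q⁆)
    (hbB : ∀ p q : V, B (bB p q) = ⁅B p, B q⁆)
    (hcross : ∀ p q : V, ⁅A p, B q⁆ + ⁅B p, A q⁆ = A (bB p q) + B (bA p q)) :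
    ∀ lam mu : k, (lam, mu) ≠ (0, 0) → ∀ bC : V → V → V,
      (∀ p q : V, (lam • A + mu • B) (bC p q)
          = ⁅(lam • A + mu • B) p, (lam • A + mu • B) q⁆) →
      ∀ p q : V, bC p q = lam • bA p q + mu • bB p q := by
  intro lam mu hne bC hbC p q
  apply (hcomb lam mu hne).1
  rw [hbC p q]
  have h1 : ⁅A p, B q⁆ + ⁅B p, A q⁆ = A (bB p q) + B (bA p q) := hcross p q
  simp only [LinearMap.add_apply, LinearMap.smul_apply, map_add, map_smul,
    lie_add, add_lie, lie_smul, smul_lie, hbA, hbB, smul_add, smul_smul]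
  rw [mul_comm mu lam]
  have := congrArg (fun x => lam • mu • x) h1
  simp only [smul_add, smul_smul] at this
  linear_combination (norm := abel) this
end

section
/- Let g be a Lie algebra, V a vector space, and A₁, …, A_N : V → g injective linear maps with involutive images such that every nonzero linear combination A_λ = Σ λᵢ Aᵢ is injective with involutive image. If the operators are pairwise linear compatible (i.e. for each pair i ≠ j the induced bracket of any combination λᵢAᵢ + λⱼAⱼ equals λᵢ[·,·]_{Aᵢ} + λⱼ[·,·]_{Aⱼ}), then they are collectively linear compatible: the bracket induced by A_λ equals Σᵢ λᵢ [·,·]_{Aᵢ} for all λ. -/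
private lemma sum_lie_aux {g : Type*} [LieRing g] {ι : Type*} (s : Finset ι)
    (f : ι → g) (y : g) : ⁅∑ i ∈ s, f i, y⁆ = ∑ i ∈ s, ⁅f i, y⁆ := by
  induction s using Finset.cons_induction with
  | empty => simp
  | cons a s ha ih => simp [Finset.sum_cons, add_lie, ih]

private lemma lie_sum_aux {g : Type*} [LieRing g] {ι : Type*} (s : Finset ι)
    (f : ι → g) (y : g) : ⁅y, ∑ i ∈ s, f i⁆ = ∑ i ∈ s, ⁅y, f i⁆ := by
  induction s using Finset.cons_induction with
  | empty => simp
  | cons a s ha ih => simp [Finset.sum_cons, lie_add, ih]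

/-- Pairwise linear compatibility of `N` injective operators
`A₁, …, A_N : V → g` with involutive images (with every nonzero combination injective
with involutive image) implies collective linear compatibility: the bracket induced by
`A_λ = Σ λᵢ Aᵢ` equals `Σᵢ λᵢ [·,·]_{Aᵢ}`. -/
theorem pairwise_implies_collective_linear_compatibility
    {k g V : Type*} [Field k] [LieRing g] [LieAlgebra k g]
    [AddCommGroup V] [Module k V] {N : ℕ}
    (A : Fin N → (V →ₗ[k] g))
    (hinj : ∀ i, Function.Injective (A i))
    (hinv : ∀ i, ∀ p q : V, ⁅A i p, A i q⁆ ∈ LinearMap.range (A i))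
    (hcombinj : ∀ lam : Fin N → k, lam ≠ 0 →
      Function.Injective (∑ i, lam i • A i))
    (hcombinv : ∀ lam : Fin N → k, lam ≠ 0 → ∀ p q : V,
      ⁅(∑ i, lam i • A i) p, (∑ i, lam i • A i) q⁆
        ∈ LinearMap.range (∑ i, lam i • A i))
    (b : Fin N → V → V → V)
    (hb : ∀ i, ∀ p q : V, A i (b i p q) = ⁅A i p, A i q⁆)
    (hpair : ∀ i j, i ≠ j → ∀ c d : k, (c, d) ≠ (0, 0) →
      ∀ bC : V → V → V,
        (∀ p q : V, (c • A i + d • A j) (bC p q)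
            = ⁅(c • A i + d • A j) p, (c • A i + d • A j) q⁆) →
        ∀ p q : V, bC p q = c • b i p q + d • b j p q) :
    ∀ lam : Fin N → k, lam ≠ 0 → ∀ bL : V → V → V,
      (∀ p q : V, (∑ i, lam i • A i) (bL p q)
          = ⁅(∑ i, lam i • A i) p, (∑ i, lam i • A i) q⁆) →
      ∀ p q : V, bL p q = ∑ i, lam i • b i p q := by
  classical
  -- Key pairwise identity: for i ≠ j,
  -- A i (b j p q) + A j (b i p q) = ⁅A i p, A j q⁆ + ⁅A j p, A i q⁆
  have key : ∀ i j, i ≠ j → ∀ p q : V,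
      A i (b j p q) + A j (b i p q) = ⁅A i p, A j q⁆ + ⁅A j p, A i q⁆ := by
    intro i j hij p q
    set mu : Fin N → k := fun t =>
      (if t = i then (1 : k) else 0) + (if t = j then (1 : k) else 0) with hmu
    have hmusum : (∑ t, mu t • A t) = A i + A j := by
      simp only [hmu, add_smul]
      rw [Finset.sum_add_distrib]
      congr 1
      · simp [ite_smul]
      · simp [ite_smul]
    have hmune : mu ≠ 0 := by
      intro h
      have : mu i = 0 := by rw [h]; rfl
      simp [hmu, hij] at this
    -- build bC from surjectivity onto the bracket
    have hex : ∀ p q : V, ∃ w, (A i + A j) w = ⁅(A i + A j) p, (A i + A j) q⁆ := by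
      intro p q
      obtain ⟨w, hw⟩ := hcombinv mu hmune p q
      exact ⟨w, by rw [← hmusum]; exact hw⟩
    obtain ⟨bC, hbC0⟩ : ∃ bC : V → V → V, ∀ p q : V,
        (A i + A j) (bC p q) = ⁅(A i + A j) p, (A i + A j) q⁆ :=
      ⟨fun p q => (hex p q).choose, fun p q => (hex p q).choose_spec⟩
    have h11 : (1:k) • A i + (1:k) • A j = A i + A j := by simp
    have hbC : ∀ p q : V, ((1:k) • A i + (1:k) • A j) (bC p q)
        = ⁅((1:k) • A i + (1:k) • A j) p, ((1:k) • A i + (1:k) • A j) q⁆ := by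
      intro p q; rw [h11]; exact hbC0 p q
    have hone : ((1:k), (1:k)) ≠ ((0:k), (0:k)) := by simp
    have hval := hpair i j hij 1 1 hone bC hbC p q
    have hbCpq := hbC p q
    rw [hval] at hbCpq
    simp only [one_smul, LinearMap.add_apply, map_add] at hbCpq
    -- hbCpq : A i (b i) + A i (b j) + (A j (b i) + A j (b j))
    --        = ⁅A i p + A j p, A i q + A j q⁆
    rw [add_lie, lie_add, lie_add, ← hb i p q, ← hb j p q] at hbCpq
    rw [← sub_eq_zero] at hbCpq ⊢
    rw [show A i (b j p q) + A j (b i p q) - (⁅A i p, A j q⁆ + ⁅A j p, A i q⁆)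
        = A i (b i p q) + A j (b i p q) + (A i (b j p q) + A j (b j p q))
          - (A i (b i p q) + ⁅A i p, A j q⁆ + (⁅A j p, A i q⁆ + A j (b j p q)))
      from by abel]
    exact hbCpq
  intro lam hlam bL hbL p q
  apply hcombinj lam hlam
  simp only [← LinearMap.coe_sum]
  rw [hbL p q]
  -- expand both sides as double sums
  have lhs_eq : ⁅(∑ i, lam i • A i) p, (∑ i, lam i • A i) q⁆
      = ∑ i, ∑ j, lam i • lam j • ⁅A i p, A j q⁆ := by
    simp only [LinearMap.sum_apply, LinearMap.smul_apply, sum_lie_aux, lie_sum_aux,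
      smul_lie, lie_smul, Finset.smul_sum]
    rw [Finset.sum_comm]
    exact Finset.sum_congr rfl fun i _ => Finset.sum_congr rfl fun j _ => smul_comm _ _ _
  have rhs_eq : (∑ i, lam i • A i) (∑ j, lam j • b j p q)
      = ∑ i, ∑ j, lam i • lam j • (A i (b j p q)) := by
    simp only [LinearMap.sum_apply, LinearMap.smul_apply, map_sum, map_smul,
      Finset.smul_sum]
    rw [Finset.sum_comm]
    exact Finset.sum_congr rfl fun i _ => Finset.sum_congr rfl fun j _ => smul_comm _ _ _
  rw [lhs_eq, rhs_eq]
  rw [← sub_eq_zero, ← Finset.sum_sub_distrib]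
  simp only [← Finset.sum_sub_distrib]
  rw [← Finset.sum_product']
  refine Finset.sum_ninvolution (fun x => (x.2, x.1)) ?_ ?_ (by simp) (by simp)
  · rintro ⟨i, j⟩
    by_cases hij : i = j
    · subst hij
      simp [hb i p q]
    · have hk := key i j hij p q
      have : lam i • lam j • (A i (b j p q) + A j (b i p q))
          = lam i • lam j • (⁅A i p, A j q⁆ + ⁅A j p, A i q⁆) := by rw [hk]
      simp only [smul_add] at this
      have hcomm : lam j • lam i • A j (b i p q) = lam i • lam j • A j (b i p q) := by
        rw [smul_comm]
      have hcomm2 : lam j • lam i • (⁅A j p, A i q⁆ : g) = lam i • lam j • ⁅A j p, A i q⁆ := by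
        rw [smul_comm]
      simp only [hcomm, hcomm2]
      have this' := this.symm
      rw [← sub_eq_zero] at this'
      rw [← this']
      abel
  · rintro ⟨i, j⟩ h
    intro heq
    have : i = j := congrArg Prod.snd heq
    subst this
    simp [hb i p q] at h
end

section
/- Let g be a Lie algebra, V a vector space, and A, B : V → g injective linear maps with involutive images such that A + B is injective with involutive image and the induced bracket satisfies [p,q]_{A+B} = [p,q]_A + [p,q]_B for all p,q. Then for all p, q ∈ V: [A p, B q] + [B p, A q] = A([p,q]_B) + B([p,q]_A). -/
/-- converse direction of the Corollary: If `A, B : V → g` are injective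
linear maps with involutive images, `A + B` is injective with involutive image, and the
induced brackets satisfy `[p,q]_{A+B} = [p,q]_A + [p,q]_B`, then
`[Ap, Bq] + [Bp, Aq] = A([p,q]_B) + B([p,q]_A)` for all `p, q`. -/
theorem cross_identity_of_additive_bracket
    {k g V : Type*} [Field k] [LieRing g] [LieAlgebra k g]
    [AddCommGroup V] [Module k V]
    (A B : V →ₗ[k] g) (hA : Function.Injective A) (hB : Function.Injective B)
    (hAinv : ∀ p q : V, ⁅A p, A q⁆ ∈ LinearMap.range A)
    (hBinv : ∀ p q : V, ⁅B p, B q⁆ ∈ LinearMap.range B)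
    (hABinj : Function.Injective (A + B))
    (hABinv : ∀ p q : V, ⁅(A + B) p, (A + B) q⁆ ∈ LinearMap.range (A + B))
    (bA bB bAB : V → V → V)
    (hbA : ∀ p q : V, A (bA p q) = ⁅A p, A q⁆)
    (hbB : ∀ p q : V, B (bB p q) = ⁅B p, B q⁆)
    (hbAB : ∀ p q : V, (A + B) (bAB p q) = ⁅(A + B) p, (A + B) q⁆)
    (hadd : ∀ p q : V, bAB p q = bA p q + bB p q) :
    ∀ p q : V, ⁅A p, B q⁆ + ⁅B p, A q⁆ = A (bB p q) + B (bA p q) := by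
  intro p q
  have h := hbAB p q
  rw [hadd p q] at h
  simp only [LinearMap.add_apply, map_add, lie_add, add_lie, hbA, hbB] at h
  have := h
  abel_nf at this ⊢
  linear_combination (norm := abel_nf) -this
end
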